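/- (Taylor remainder bound for band-limited sums) Let f(x) = Σ_{l=1}^n f_l(x) e^{i c_l·x} on T^d_L with each f_l smooth, c_l ∈ R^d, let Λ be a unit cube, y_0 ∈ Λ, η ∈ S^{d-1}, 0 < ρ ≤ √d with y_0 + tρη ∈ Λ for t ∈ [0,1] and |ρη_i| ≤ 1 for all i. Define the Taylor remainder T(t) = Σ_l e^{ic_l·(y_0+tρη)}/(m-1)! ∫_0^t (t-s)^{m-1} (d^m/ds^m) f_l(y_0 + sρη) ds. Then max_{t∈[0,1]} |T(t)| ≤ (1/m!) Σ_{l=1}^n Σ_{|α|=m} (m!/α!) Σ_{β∈{0,1}^d} ‖∂^{α+β} f_l‖_{L^1(Λ)}. -/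

import Mathlib

open MeasureTheory

/-- Directional derivative along the `i`-th coordinate. -/
noncomputable def coordDeriv {d : ℕ} (i : Fin d) (g : (Fin d → ℝ) → ℂ) : (Fin d → ℝ) → ℂ :=
  fun x => fderiv ℝ g x (Pi.single i 1)

/-- Multi-index partial derivative `∂^α`. -/
noncomputable def mderiv {d : ℕ} (α : Fin d → ℕ) (g : (Fin d → ℝ) → ℂ) : (Fin d → ℝ) → ℂ :=
  (List.finRange d).foldr (fun i h => (coordDeriv i)^[α i] h) g

/-- The axis-parallel unit cube with lower-left corner `r`. -/
def unitCube {d : ℕ} (r : Fin d → ℝ) : Set (Fin d → ℝ) :=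
  Set.univ.pi fun i => Set.Icc (r i) (r i + 1)

open scoped Classical in
/-- The multi-indices `α ∈ ℕ₀^d` with `|α| = m`. -/
noncomputable def multiIdx (d m : ℕ) : Finset (Fin d → ℕ) :=
  (Fintype.piFinset fun _ : Fin d => Finset.range (m + 1)).filter fun α => ∑ i, α i = m

/-- The multi-indices `β ∈ {0,1}^d`. -/
noncomputable def zeroOneIdx (d : ℕ) : Finset (Fin d → ℕ) :=
  Fintype.piFinset fun _ : Fin d => Finset.range 2

open scoped ENNReal NNReal


noncomputable def Dl {d : ℕ} (l : List (Fin d)) (g : (Fin d → ℝ) → ℂ) : (Fin d → ℝ) → ℂ :=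
  l.foldr (fun i h => coordDeriv i h) g

lemma coordDeriv_eq {d : ℕ} (i : Fin d) (g : (Fin d → ℝ) → ℂ) :
    coordDeriv i g = (ContinuousLinearMap.apply ℝ ℂ (Pi.single i 1)) ∘ (fderiv ℝ g) := rfl

lemma ContDiff.coordDeriv' {d : ℕ} (i : Fin d) {g : (Fin d → ℝ) → ℂ} (hg : ContDiff ℝ (⊤ : ℕ∞) g) :
    ContDiff ℝ (⊤ : ℕ∞) (coordDeriv i g) := by
  rw [coordDeriv_eq]
  exact (ContinuousLinearMap.apply ℝ ℂ (Pi.single i 1)).contDiff.comp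
    (hg.fderiv_right (m := (⊤ : ℕ∞)) (by simp))

lemma ContDiff.Dl' {d : ℕ} (l : List (Fin d)) {g : (Fin d → ℝ) → ℂ} (hg : ContDiff ℝ (⊤ : ℕ∞) g) :
    ContDiff ℝ (⊤ : ℕ∞) (Dl l g) := by
  induction l with
  | nil => exact hg
  | cons a l ih => exact ih.coordDeriv' a

lemma Dl_cons {d : ℕ} (a : Fin d) (l : List (Fin d)) (g : (Fin d → ℝ) → ℂ) :
    Dl (a :: l) g = coordDeriv a (Dl l g) := rfl

lemma Dl_append {d : ℕ} (l₁ l₂ : List (Fin d)) (g : (Fin d → ℝ) → ℂ) :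
    Dl (l₁ ++ l₂) g = Dl l₁ (Dl l₂ g) := List.foldr_append ..

lemma Dl_concat {d : ℕ} (l : List (Fin d)) (i : Fin d) (g : (Fin d → ℝ) → ℂ) :
    Dl (l ++ [i]) g = Dl l (coordDeriv i g) := Dl_append ..

lemma coordDeriv_comm {d : ℕ} (a b : Fin d) {g : (Fin d → ℝ) → ℂ} (hg : ContDiff ℝ (⊤ : ℕ∞) g) :
    coordDeriv a (coordDeriv b g) = coordDeriv b (coordDeriv a g) := by
  have hg1 : ContDiff ℝ (⊤ : ℕ∞) (fderiv ℝ g) := hg.fderiv_right (by exact (by simp))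
  have key : ∀ (v w : Fin d → ℝ) (x : Fin d → ℝ),
      fderiv ℝ (fun y => fderiv ℝ g y w) x v = fderiv ℝ (fderiv ℝ g) x v w := by
    intro v w x
    rw [fderiv_clm_apply (hg1.differentiable (by simp) x) (differentiableAt_const w)]
    simp
  funext x
  show fderiv ℝ (fun y => fderiv ℝ g y (Pi.single b 1)) x (Pi.single a 1) =
    fderiv ℝ (fun y => fderiv ℝ g y (Pi.single a 1)) x (Pi.single b 1)
  rw [key, key]
  exact second_derivative_symmetric
    (f' := fderiv ℝ g)
    (fun y => (hg.differentiable (by simp) y).hasFDerivAt)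
    ((hg1.differentiable (by simp) x).hasFDerivAt) _ _

lemma Dl_perm {d : ℕ} {l₁ l₂ : List (Fin d)} (h : l₁.Perm l₂) :
    ∀ (g : (Fin d → ℝ) → ℂ), ContDiff ℝ (⊤ : ℕ∞) g → Dl l₁ g = Dl l₂ g := by
  induction h with
  | nil => intro g _; rfl
  | cons a _ ih =>
      intro g hg
      rw [Dl_cons, Dl_cons, ih g hg]
  | swap a b l =>
      intro g hg
      rw [Dl_cons, Dl_cons, Dl_cons, Dl_cons]
      rw [coordDeriv_comm b a (hg.Dl' l)]
  | trans _ _ ih₁ ih₂ => intro g hg; rw [ih₁ g hg, ih₂ g hg]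

/-- canonical list of a multi-index -/
def canList {d : ℕ} (α : Fin d → ℕ) : List (Fin d) :=
  (List.finRange d).flatMap fun i => List.replicate (α i) i

lemma Dl_replicate {d : ℕ} (k : ℕ) (i : Fin d) (g : (Fin d → ℝ) → ℂ) :
    Dl (List.replicate k i) g = (coordDeriv i)^[k] g := by
  induction k with
  | zero => rfl
  | succ k ih =>
      rw [List.replicate_succ]
      show coordDeriv i (Dl (List.replicate k i) g) = _
      rw [ih, Function.iterate_succ_apply']

lemma mderiv_eq_Dl {d : ℕ} (α : Fin d → ℕ) (g : (Fin d → ℝ) → ℂ) :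
    mderiv α g = Dl (canList α) g := by
  show (List.finRange d).foldr (fun i h => (coordDeriv i)^[α i] h) g = _
  unfold canList
  induction (List.finRange d) with
  | nil => rfl
  | cons a L ih => rw [List.foldr_cons, ih, List.flatMap_cons, Dl_append, Dl_replicate]

lemma count_canList {d : ℕ} (α : Fin d → ℕ) (i : Fin d) :
    (canList α).count i = α i := by
  unfold canList
  rw [List.count_flatMap]
  have : ∀ j : Fin d, (List.count i ∘ fun i' => List.replicate (α i') i') j
      = if j = i then α i else 0 := by
    intro j
    simp only [Function.comp_apply, List.count_replicate, beq_iff_eq]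
    by_cases h : i = j <;> simp [h, eq_comm]
  rw [List.map_congr_left (fun j _ => this j)]
  rw [← Fin.sum_univ_def]
  simp

lemma Dl_count_eq {d : ℕ} {l : List (Fin d)} {α : Fin d → ℕ}
    (hc : ∀ i, l.count i = α i) (g : (Fin d → ℝ) → ℂ) (hg : ContDiff ℝ (⊤ : ℕ∞) g) :
    Dl l g = mderiv α g := by
  rw [mderiv_eq_Dl]
  refine Dl_perm ?_ g hg
  rw [List.perm_iff_count]
  intro i
  rw [hc i, count_canList]


variable {d : ℕ}

lemma iteratedFDeriv_single (k : ℕ) (f : (Fin d → ℝ) → ℂ) (hf : ContDiff ℝ (⊤ : ℕ∞) f)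
    (x : Fin d → ℝ) (j : Fin k → Fin d) :
    iteratedFDeriv ℝ k f x (fun q => (Pi.single (j q) 1 : Fin d → ℝ)) = Dl (List.ofFn j) f x := by
  induction k generalizing f with
  | zero => simp [Dl]
  | succ k ih =>
    rw [iteratedFDeriv_succ_apply_right]
    have hL : iteratedFDeriv ℝ k (fun y => fderiv ℝ f y) x
          (Fin.init fun q => (Pi.single (j q) 1 : Fin d → ℝ)) ((Pi.single (j (Fin.last k)) 1 : Fin d → ℝ))
        = iteratedFDeriv ℝ k (coordDeriv (j (Fin.last k)) f) x
          (Fin.init fun q => (Pi.single (j q) 1 : Fin d → ℝ)) := by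
      have := (ContinuousLinearMap.apply ℝ ℂ (Pi.single (j (Fin.last k)) 1)).iteratedFDeriv_comp_left
        (f := fun y => fderiv ℝ f y) ((hf.fderiv_right (m := (⊤ : ℕ∞)) (by simp)).contDiffAt (x := x))
        (i := k) (by exact_mod_cast (le_top : (k : ℕ∞) ≤ ⊤))
      rw [show (⇑(ContinuousLinearMap.apply ℝ ℂ (Pi.single (j (Fin.last k)) 1)) ∘ fun y => fderiv ℝ f y)
          = coordDeriv (j (Fin.last k)) f from rfl] at this
      rw [this]
      rfl
    rw [hL]
    have hinit : (Fin.init fun q => (Pi.single (j q) 1 : Fin d → ℝ))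
        = fun q : Fin k => (Pi.single ((j ∘ Fin.castSucc) q) 1 : Fin d → ℝ) := rfl
    rw [hinit, ih _ (hf.coordDeriv' _) (j ∘ Fin.castSucc)]
    have : List.ofFn j = List.ofFn (j ∘ Fin.castSucc) ++ [j (Fin.last k)] := by
      rw [List.ofFn_succ']
      simp [List.concat_eq_append]
      rfl
    rw [this, Dl_concat]

lemma iteratedDeriv_line (f : (Fin d → ℝ) → ℂ) (hf : ContDiff ℝ (⊤ : ℕ∞) f)
    (y₀ v : Fin d → ℝ) (k : ℕ) :
    iteratedDeriv k (fun s : ℝ => f fun i => y₀ i + s * v i)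
      = fun s => iteratedFDeriv ℝ k f (fun i => y₀ i + s * v i) (fun _ => v) := by
  induction k with
  | zero => funext s; simp
  | succ k ih =>
    rw [iteratedDeriv_succ, ih]
    funext s
    have hγ : ∀ s : ℝ, HasDerivAt (fun s : ℝ => (fun i => y₀ i + s * v i : Fin d → ℝ)) v s := by
      intro s
      rw [hasDerivAt_pi]
      intro i
      simpa [mul_comm] using ((hasDerivAt_id s).const_mul (v i)).const_add (y₀ i)
    have hd : HasDerivAt (fun s : ℝ => iteratedFDeriv ℝ k f (fun i => y₀ i + s * v i))
        (fderiv ℝ (iteratedFDeriv ℝ k f) (fun i => y₀ i + s * v i) v) s := by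
      have hdiff : DifferentiableAt ℝ (iteratedFDeriv ℝ k f) (fun i => y₀ i + s * v i) :=
        (hf.iteratedFDeriv_right (m := (⊤ : ℕ∞)) (i := k) (by exact (by exact_mod_cast le_top))).differentiable (by simp) _
      exact hdiff.hasFDerivAt.comp_hasDerivAt s (hγ s)
    have happ : HasDerivAt
        (fun s : ℝ => iteratedFDeriv ℝ k f (fun i => y₀ i + s * v i) (fun _ => v))
        ((fderiv ℝ (iteratedFDeriv ℝ k f) (fun i => y₀ i + s * v i) v) (fun _ => v)) s := by
      exact (ContinuousMultilinearMap.apply ℝ (fun _ : Fin k => (Fin d → ℝ)) ℂ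
        (fun _ => v)).hasFDerivAt.comp_hasDerivAt s hd
    rw [happ.deriv]
    rw [iteratedFDeriv_succ_apply_left]
    rfl



noncomputable def cnt {d m : ℕ} (j : Fin m → Fin d) : Fin d → ℕ :=
  fun i => (Finset.univ.filter fun q => j q = i).card

open scoped Classical in
lemma card_cnt_le_multinomial {d m : ℕ} (α : Fin d → ℕ) (hα : ∑ i, α i = m) :
    (Finset.univ.filter fun j : Fin m → Fin d => cnt j = α).card ≤
      Nat.multinomial Finset.univ α := by
  classical
  set T := {j : Fin m → Fin d // cnt j = α} with hT
  have hfibcard : ∀ (j : T) (i : Fin d), Fintype.card {q : Fin m // j.1 q = i} = α i := by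
    intro j i
    rw [Fintype.card_subtype]
    have := congrFun j.2 i
    exact this
  set E : (j : T) → (Fin m ≃ Σ i : Fin d, Fin (α i)) := fun j =>
    (Equiv.sigmaFiberEquiv j.1).symm.trans
      (Equiv.sigmaCongrRight fun i => Fintype.equivFinOfCardEq (hfibcard j i)) with hEdef
  have hE1 : ∀ (j : T) (k : Fin m), ((E j) k).1 = j.1 k := fun j k => rfl
  set Φ : T × (∀ i : Fin d, Equiv.Perm (Fin (α i))) → (Fin m ≃ Σ i : Fin d, Fin (α i)) :=
    fun p => (E p.1).trans (Equiv.sigmaCongrRight p.2) with hΦ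
  have hinj : Function.Injective Φ := by
    rintro ⟨j, π⟩ ⟨j', π'⟩ h
    have hj : j = j' := by
      apply Subtype.ext
      funext k
      have h1 : (Φ (j, π) k).1 = j.1 k := hE1 j k
      have h2 : (Φ (j', π') k).1 = j'.1 k := hE1 j' k
      rw [← h1, ← h2, h]
    subst hj
    have hπ : π = π' := by
      funext i
      apply Equiv.ext
      intro x
      have h1 : Φ (j, π) ((E j).symm ⟨i, x⟩) = ⟨i, π i x⟩ := by
        simp [hΦ, Equiv.sigmaCongrRight]
      have h2 : Φ (j, π') ((E j).symm ⟨i, x⟩) = ⟨i, π' i x⟩ := by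
        simp [hΦ, Equiv.sigmaCongrRight]
      rw [h] at h1
      rw [h1] at h2
      obtain ⟨-, h3⟩ := Sigma.mk.inj_iff.1 h2
      exact eq_of_heq h3
    rw [hπ]
  have hcard : Fintype.card (T × (∀ i : Fin d, Equiv.Perm (Fin (α i)))) ≤
      Fintype.card (Fin m ≃ Σ i : Fin d, Fin (α i)) :=
    Fintype.card_le_of_injective Φ hinj
  have hcard2 : Fintype.card (Fin m ≃ Σ i : Fin d, Fin (α i)) = m.factorial := by
    rw [Fintype.card_equiv (Fintype.equivOfCardEq (by simp [hα]))]
    simp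
  have hcard3 : Fintype.card (T × (∀ i : Fin d, Equiv.Perm (Fin (α i)))) =
      (Finset.univ.filter fun j : Fin m → Fin d => cnt j = α).card * ∏ i, (α i).factorial := by
    rw [Fintype.card_prod, Fintype.card_pi]
    congr 1
    · exact (Fintype.card_subtype _)
    · exact Finset.prod_congr rfl fun i _ => by simp [Fintype.card_perm]
  have key : (Finset.univ.filter fun j : Fin m → Fin d => cnt j = α).card *
      ∏ i, (α i).factorial ≤ m.factorial := by
    rw [← hcard3, ← hcard2]; exact hcard
  have hspec := Nat.multinomial_spec Finset.univ α
  rw [hα] at hspec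
  have hpos : 0 < ∏ i, (α i).factorial := Finset.prod_pos fun i _ => Nat.factorial_pos _
  rw [← hspec, mul_comm (∏ i ∈ Finset.univ, (α i).factorial)] at key
  exact Nat.le_of_mul_le_mul_right key hpos


lemma oneD {φ φ' : ℝ → ℂ} (hd : ∀ u, HasDerivAt φ (φ' u) u)
    (hc : Continuous φ) (hc' : Continuous φ') {a t : ℝ} (ht : t ∈ Set.Icc a (a + 1)) :
    (‖φ t‖₊ : ℝ≥0∞) ≤ ∫⁻ u in Set.Icc a (a + 1), (‖φ u‖₊ + ‖φ' u‖₊) ∂volume := by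
  have hInt2 : IntegrableOn φ' (Set.Icc a (a + 1)) volume :=
    hc'.continuousOn.integrableOn_compact isCompact_Icc
  have hInt' : IntegrableOn (fun u => ‖φ' u‖) (Set.Icc a (a + 1)) volume := hInt2.norm
  set C : ℝ := ∫ u in Set.Icc a (a + 1), ‖φ' u‖ with hC
  have hCnn : 0 ≤ C := integral_nonneg fun u => norm_nonneg _
  have stepA : ∀ u ∈ Set.Icc a (a + 1), ‖φ t‖ ≤ ‖φ u‖ + C := by
    intro u hu
    have hftc : ∫ w in u..t, φ' w = φ t - φ u :=
      intervalIntegral.integral_eq_sub_of_hasDerivAt (fun w _ => hd w)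
        (hc'.intervalIntegrable u t)
    have h1 : ‖φ t - φ u‖ ≤ C := by
      rw [← hftc]
      refine le_trans (intervalIntegral.norm_integral_le_integral_norm_uIoc) ?_
      rw [hC]
      apply setIntegral_mono_set hInt'
      · exact Filter.Eventually.of_forall fun w => norm_nonneg _
      · apply HasSubset.Subset.eventuallyLE
        intro w hw
        exact ⟨le_of_lt (lt_of_le_of_lt (le_min hu.1 ht.1) hw.1),
          le_trans hw.2 (max_le hu.2 ht.2)⟩
    calc ‖φ t‖ = ‖φ u + (φ t - φ u)‖ := by ring_nf
      _ ≤ ‖φ u‖ + ‖φ t - φ u‖ := norm_add_le _ _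
      _ ≤ ‖φ u‖ + C := by linarith
  have hmeas : volume (Set.Icc a (a + 1)) = 1 := by
    rw [Real.volume_Icc]; norm_num
  have : (‖φ t‖₊ : ℝ≥0∞) = ∫⁻ _ in Set.Icc a (a + 1), (‖φ t‖₊ : ℝ≥0∞) ∂volume := by
    rw [setLIntegral_const, hmeas, mul_one]
  rw [this]
  have hbound : ∀ᵐ u ∂(volume.restrict (Set.Icc a (a + 1))),
      (‖φ t‖₊ : ℝ≥0∞) ≤ ‖φ u‖₊ + ENNReal.ofReal C := by
    filter_upwards [ae_restrict_mem measurableSet_Icc] with u hu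
    have := stepA u hu
    calc (‖φ t‖₊ : ℝ≥0∞) = ENNReal.ofReal ‖φ t‖ := (ofReal_norm _).symm
      _ ≤ ENNReal.ofReal (‖φ u‖ + C) := ENNReal.ofReal_le_ofReal this
      _ = ENNReal.ofReal ‖φ u‖ + ENNReal.ofReal C := ENNReal.ofReal_add (norm_nonneg _) hCnn
      _ = ‖φ u‖₊ + ENNReal.ofReal C := by rw [ofReal_norm, enorm_eq_nnnorm]
  calc ∫⁻ _ in Set.Icc a (a + 1), (‖φ t‖₊ : ℝ≥0∞) ∂volume
      ≤ ∫⁻ u in Set.Icc a (a + 1), ((‖φ u‖₊ : ℝ≥0∞) + ENNReal.ofReal C) ∂volume :=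
        lintegral_mono_ae hbound
    _ = (∫⁻ u in Set.Icc a (a + 1), (‖φ u‖₊ : ℝ≥0∞) ∂volume) + ENNReal.ofReal C * 1 := by
        rw [lintegral_add_right _ measurable_const, setLIntegral_const, hmeas]
    _ = (∫⁻ u in Set.Icc a (a + 1), (‖φ u‖₊ : ℝ≥0∞) ∂volume) +
          ∫⁻ u in Set.Icc a (a + 1), (‖φ' u‖₊ : ℝ≥0∞) ∂volume := by
        simp only [mul_one, hC, ofReal_integral_norm_eq_lintegral_enorm hInt2, enorm_eq_nnnorm]
    _ = ∫⁻ u in Set.Icc a (a + 1), ((‖φ u‖₊ : ℝ≥0∞) + ‖φ' u‖₊) ∂volume := by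
        rw [← lintegral_add_right]
        exact hc'.measurable.nnnorm.coe_nnreal_ennreal


section Sobolev
variable {d : ℕ} (r : Fin d → ℝ)

noncomputable def cubeMeas (r : Fin d → ℝ) : ∀ _ : Fin d, Measure ℝ :=
  fun i => volume.restrict (Set.Icc (r i) (r i + 1))

instance (i : Fin d) : SigmaFinite (cubeMeas r i) := by
  unfold cubeMeas; infer_instance

lemma update_mem_cube {x : Fin d → ℝ} (hx : x ∈ unitCube r) {i : Fin d} {u : ℝ}
    (hu : u ∈ Set.Icc (r i) (r i + 1)) : Function.update x i u ∈ unitCube r := by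
  intro k _
  rcases eq_or_ne k i with rfl | hk
  · simpa using hu
  · simpa [Function.update_of_ne hk] using hx k (Set.mem_univ k)

lemma sobolev_aux (s : Finset (Fin d)) :
    ∀ (h : (Fin d → ℝ) → ℂ), ContDiff ℝ (⊤ : ℕ∞) h → ∀ x ∈ unitCube r,
    (‖h x‖₊ : ℝ≥0∞) ≤ ∑ u ∈ s.powerset,
      (∫⋯∫⁻_s, (fun z => (‖Dl u.toList h z‖₊ : ℝ≥0∞)) ∂(cubeMeas r)) x := by
  classical
  induction s using Finset.induction_on with
  | empty =>
      intro h hh x hx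
      simp [MeasureTheory.lmarginal_empty, Dl]
  | @insert i s his ih =>
      intro h hh x hx
      -- measurability helper
      have hmeas : ∀ (g : (Fin d → ℝ) → ℂ), ContDiff ℝ (⊤ : ℕ∞) g →
          Measurable (fun z => (‖g z‖₊ : ℝ≥0∞)) := fun g hg =>
        (hg.continuous.measurable.nnnorm).coe_nnreal_ennreal
      -- one-dimensional step in coordinate i
      have hup : ∀ u : ℝ, HasDerivAt (fun u : ℝ => (Function.update x i u : Fin d → ℝ))
          (Pi.single i 1) u := by
        intro u
        rw [hasDerivAt_pi]
        intro k
        rcases eq_or_ne k i with rfl | hk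
        · simpa [Function.update_self] using (hasDerivAt_id' (x := u))
        · simpa [Function.update_of_ne hk, Pi.single_apply, hk] using
            (hasDerivAt_const u (x k))
      have hφd : ∀ u : ℝ, HasDerivAt (fun u => h (Function.update x i u))
          (coordDeriv i h (Function.update x i u)) u := by
        intro u
        exact ((hh.differentiable (by simp) _).hasFDerivAt).comp_hasDerivAt u (hup u)
      have hupc : Continuous (fun u : ℝ => (Function.update x i u : Fin d → ℝ)) := by
        apply continuous_pi
        intro k
        rcases eq_or_ne k i with rfl | hk
        · simpa [Function.update_self] using continuous_id'
        · simpa [Function.update_of_ne hk] using continuous_const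
      have h1d := oneD (φ := fun u => h (Function.update x i u))
        (φ' := fun u => coordDeriv i h (Function.update x i u)) hφd
        (hh.continuous.comp hupc) ((hh.coordDeriv' i).continuous.comp hupc)
        (hx i (Set.mem_univ i))
      have hxi : h x = h (Function.update x i (x i)) := by rw [Function.update_eq_self]
      rw [hxi] at *
      refine le_trans h1d ?_
      -- bound the integrand a.e. using the induction hypothesis
      have hae : ∀ᵐ u ∂(volume.restrict (Set.Icc (r i) (r i + 1))),
          (‖h (Function.update x i u)‖₊ : ℝ≥0∞) + ‖coordDeriv i h (Function.update x i u)‖₊ ≤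
          (∑ t ∈ s.powerset,
            (∫⋯∫⁻_s, (fun z => (‖Dl t.toList h z‖₊ : ℝ≥0∞)) ∂(cubeMeas r))
              (Function.update x i u)) +
          ∑ t ∈ s.powerset,
            (∫⋯∫⁻_s, (fun z => (‖Dl t.toList (coordDeriv i h) z‖₊ : ℝ≥0∞)) ∂(cubeMeas r))
              (Function.update x i u) := by
        filter_upwards [ae_restrict_mem measurableSet_Icc] with u hu
        exact add_le_add
          (ih h hh _ (update_mem_cube r hx hu))
          (ih (coordDeriv i h) (hh.coordDeriv' i) _ (update_mem_cube r hx hu))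
      refine le_trans (lintegral_mono_ae hae) ?_
      rw [lintegral_add_left]
      swap
      · apply Finset.measurable_sum
        intro t _
        exact ((hmeas _ (hh.Dl' t.toList)).lmarginal (cubeMeas r)).comp
          (measurable_pi_lambda _ fun k => by
            rcases eq_or_ne k i with rfl | hk
            · simpa [Function.update_self] using measurable_id'
            · simpa [Function.update_of_ne hk] using measurable_const)
      rw [lintegral_finset_sum, lintegral_finset_sum]
      rotate_left
      · intro t _
        exact ((hmeas _ ((hh.coordDeriv' i).Dl' t.toList)).lmarginal (cubeMeas r)).comp
          (measurable_pi_lambda _ fun k => by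
            rcases eq_or_ne k i with rfl | hk
            · simpa [Function.update_self] using measurable_id'
            · simpa [Function.update_of_ne hk] using measurable_const)
      · intro t _
        exact ((hmeas _ (hh.Dl' t.toList)).lmarginal (cubeMeas r)).comp
          (measurable_pi_lambda _ fun k => by
            rcases eq_or_ne k i with rfl | hk
            · simpa [Function.update_self] using measurable_id'
            · simpa [Function.update_of_ne hk] using measurable_const)
      -- rewrite each summand via lmarginal_insert
      have hins : ∀ (g : (Fin d → ℝ) → ℂ), ContDiff ℝ (⊤ : ℕ∞) g →
          ∫⁻ u, (∫⋯∫⁻_s, (fun z => (‖g z‖₊ : ℝ≥0∞)) ∂(cubeMeas r))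
              (Function.update x i u) ∂(cubeMeas r i)
          = (∫⋯∫⁻_insert i s, (fun z => (‖g z‖₊ : ℝ≥0∞)) ∂(cubeMeas r)) x := by
        intro g hg
        rw [MeasureTheory.lmarginal_insert _ (hmeas g hg) his]
      rw [Finset.sum_powerset_insert his]
      have e1 : ∑ t ∈ s.powerset,
          ∫⁻ u, (∫⋯∫⁻_s, (fun z => (‖Dl t.toList h z‖₊ : ℝ≥0∞)) ∂(cubeMeas r))
            (Function.update x i u) ∂(volume.restrict (Set.Icc (r i) (r i + 1)))
          = ∑ t ∈ s.powerset,
          (∫⋯∫⁻_insert i s, (fun z => (‖Dl t.toList h z‖₊ : ℝ≥0∞)) ∂(cubeMeas r)) x := by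
        refine Finset.sum_congr rfl fun t _ => ?_
        exact hins _ (hh.Dl' t.toList)
      have e2 : ∑ t ∈ s.powerset,
          ∫⁻ u, (∫⋯∫⁻_s, (fun z => (‖Dl t.toList (coordDeriv i h) z‖₊ : ℝ≥0∞)) ∂(cubeMeas r))
            (Function.update x i u) ∂(volume.restrict (Set.Icc (r i) (r i + 1)))
          = ∑ t ∈ s.powerset,
          (∫⋯∫⁻_insert i s, (fun z => (‖Dl (insert i t).toList h z‖₊ : ℝ≥0∞)) ∂(cubeMeas r)) x := by
        refine Finset.sum_congr rfl fun t ht => ?_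
        have hit : i ∉ t := fun hmem => his (Finset.mem_powerset.1 ht hmem)
        have hDl : Dl t.toList (coordDeriv i h) = Dl (insert i t).toList h := by
          have h0 : Dl t.toList (coordDeriv i h) = Dl (t.toList ++ [i]) h :=
            (Dl_append t.toList [i] h).symm
          rw [h0]
          refine Dl_perm ?_ h hh
          refine List.Perm.trans (List.perm_append_singleton i t.toList) ?_
          exact (Finset.toList_insert hit).symm
        rw [hDl]
        exact hins _ (hh.Dl' (insert i t).toList)
      rw [show (cubeMeas r i) = volume.restrict (Set.Icc (r i) (r i + 1)) from rfl] at *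
      rw [e1, e2]
end Sobolev

section Convert
variable {d : ℕ} (r : Fin d → ℝ)

lemma cube_compact : IsCompact (unitCube r) := isCompact_univ_pi fun i => isCompact_Icc

lemma pi_cubeMeas : Measure.pi (cubeMeas r) = volume.restrict (unitCube r) := by
  refine Measure.pi_eq (μ := cubeMeas r) fun t ht => ?_
  rw [unitCube, Measure.restrict_apply (MeasurableSet.univ_pi fun i => (ht i))]
  rw [← Set.pi_inter_distrib, volume_pi_pi]
  exact Finset.prod_congr rfl fun i _ =>
    (Measure.restrict_apply (ht i)).symm

lemma sobolev_real (h : (Fin d → ℝ) → ℂ) (hh : ContDiff ℝ (⊤ : ℕ∞) h)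
    (x : Fin d → ℝ) (hx : x ∈ unitCube r) :
    ‖h x‖ ≤ ∑ u ∈ (Finset.univ : Finset (Fin d)).powerset,
      ∫ z in unitCube r, ‖Dl u.toList h z‖ := by
  classical
  have haux := sobolev_aux r Finset.univ h hh x hx
  rw [show (∑ u ∈ (Finset.univ : Finset (Fin d)).powerset,
      (∫⋯∫⁻_Finset.univ, (fun z => (‖Dl u.toList h z‖₊ : ℝ≥0∞)) ∂(cubeMeas r)) x)
    = ∑ u ∈ (Finset.univ : Finset (Fin d)).powerset,
      ENNReal.ofReal (∫ z in unitCube r, ‖Dl u.toList h z‖) from ?_] at haux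
  · have hnn : 0 ≤ ∑ u ∈ (Finset.univ : Finset (Fin d)).powerset,
        ∫ z in unitCube r, ‖Dl u.toList h z‖ :=
      Finset.sum_nonneg fun u _ => integral_nonneg fun z => norm_nonneg _
    rw [← ENNReal.ofReal_sum_of_nonneg
      (fun u _ => integral_nonneg fun z => norm_nonneg _)] at haux
    rw [← enorm_eq_nnnorm, ← ofReal_norm] at haux
    exact (ENNReal.ofReal_le_ofReal_iff hnn).1 haux
  · refine Finset.sum_congr rfl fun u _ => ?_
    rw [MeasureTheory.lmarginal_univ, pi_cubeMeas]
    have hInt : IntegrableOn (Dl u.toList h) (unitCube r) volume :=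
      (hh.Dl' u.toList).continuous.continuousOn.integrableOn_compact (cube_compact r)
    simp only [ofReal_integral_norm_eq_lintegral_enorm hInt, enorm_eq_nnnorm]
end Convert

section Final
variable {d : ℕ}

lemma ContDiff.mderiv' (α : Fin d → ℕ) {f : (Fin d → ℝ) → ℂ} (hf : ContDiff ℝ (⊤ : ℕ∞) f) :
    ContDiff ℝ (⊤ : ℕ∞) (mderiv α f) := by
  rw [mderiv_eq_Dl]; exact hf.Dl' _

lemma count_ofFn {m : ℕ} (j : Fin m → Fin d) (i : Fin d) :
    (List.ofFn j).count i = (Finset.univ.filter fun q => j q = i).card := by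
  classical
  have hv := Fin.card_filter_univ_eq_vector_get_eq_count i (List.Vector.ofFn j)
  rw [List.Vector.toList_ofFn] at hv
  rw [← hv]
  congr 1
  ext q
  simp [List.Vector.get_ofFn]

lemma count_toList (u : Finset (Fin d)) (i : Fin d) :
    u.toList.count i = if i ∈ u then 1 else 0 := by
  classical
  split_ifs with h
  · exact List.count_eq_one_of_mem u.nodup_toList (Finset.mem_toList.2 h)
  · exact List.count_eq_zero_of_not_mem (fun hc => h (Finset.mem_toList.1 hc))

lemma Dl_toList_mderiv (r : Fin d → ℝ) (u : Finset (Fin d)) (α : Fin d → ℕ)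
    {f : (Fin d → ℝ) → ℂ} (hf : ContDiff ℝ (⊤ : ℕ∞) f) :
    Dl u.toList (mderiv α f) = mderiv (fun i => α i + (if i ∈ u then 1 else 0)) f := by
  rw [mderiv_eq_Dl α, ← Dl_append]
  apply Dl_count_eq _ _ hf
  intro i
  rw [List.count_append, count_toList, count_canList]
  ring

lemma sobolev_mderiv (r : Fin d → ℝ) {f : (Fin d → ℝ) → ℂ} (hf : ContDiff ℝ (⊤ : ℕ∞) f)
    (α : Fin d → ℕ) {x : Fin d → ℝ} (hx : x ∈ unitCube r) :
    ‖mderiv α f x‖ ≤ ∑ β ∈ zeroOneIdx d,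
      ∫ z in unitCube r, ‖mderiv (fun i => α i + β i) f z‖ := by
  classical
  refine le_trans (sobolev_real r (mderiv α f) (hf.mderiv' α) x hx) (le_of_eq ?_)
  refine Finset.sum_nbij' (fun u => fun i => if i ∈ u then 1 else 0)
    (fun β => Finset.univ.filter fun i => β i = 1) ?_ ?_ ?_ ?_ ?_
  · intro u _
    rw [zeroOneIdx, Fintype.mem_piFinset]
    intro i
    rw [Finset.mem_range]
    show (if i ∈ u then 1 else 0) < 2
    split_ifs <;> omega
  · intro β _
    exact Finset.mem_powerset.2 (Finset.subset_univ _)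
  · intro u _
    ext i
    simp
  · intro β hβ
    funext i
    have := Fintype.mem_piFinset.1 hβ i
    rw [Finset.mem_range] at this
    simp only [Finset.mem_filter, Finset.mem_univ, true_and]
    split_ifs with h
    · omega
    · omega
  · intro u _
    rw [Dl_toList_mderiv r u α hf]

lemma pointwise_bound (r : Fin d → ℝ) (m : ℕ) {f : (Fin d → ℝ) → ℂ} (hf : ContDiff ℝ (⊤ : ℕ∞) f)
    (v : Fin d → ℝ) (hv : ∀ i, |v i| ≤ 1) {x : Fin d → ℝ} (hx : x ∈ unitCube r) :
    ‖iteratedFDeriv ℝ m f x (fun _ => v)‖ ≤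
      ∑ α ∈ multiIdx d m, (Nat.multinomial Finset.univ α : ℝ) *
        ∑ β ∈ zeroOneIdx d, ∫ z in unitCube r, ‖mderiv (fun i => α i + β i) f z‖ := by
  classical
  set S : (Fin d → ℕ) → ℝ := fun α => ∑ β ∈ zeroOneIdx d,
    ∫ z in unitCube r, ‖mderiv (fun i => α i + β i) f z‖ with hS
  have hSnn : ∀ α, 0 ≤ S α := fun α =>
    Finset.sum_nonneg fun β _ => integral_nonneg fun z => norm_nonneg _
  -- expansion
  have hv' : v = ∑ i, v i • (Pi.single i 1 : Fin d → ℝ) := by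
    funext k
    rw [Finset.sum_apply]
    simp only [Pi.smul_apply, Pi.single_apply, smul_eq_mul, mul_ite, mul_one, mul_zero]
    rw [Finset.sum_ite_eq Finset.univ k (fun i => v i)]
    simp
  have hexp : iteratedFDeriv ℝ m f x (fun _ => v) =
      ∑ j : Fin m → Fin d, (∏ q, v (j q)) •
        iteratedFDeriv ℝ m f x (fun q => (Pi.single (j q) 1 : Fin d → ℝ)) := by
    conv_lhs => rw [show (fun _ : Fin m => v) =
      fun _ : Fin m => ∑ i, v i • (Pi.single i 1 : Fin d → ℝ) from funext fun _ => hv']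
    rw [ContinuousMultilinearMap.map_sum (iteratedFDeriv ℝ m f x)
      (fun _ i => v i • (Pi.single i 1 : Fin d → ℝ))]
    exact Finset.sum_congr rfl fun j _ =>
      ContinuousMultilinearMap.map_smul_univ (iteratedFDeriv ℝ m f x) (fun q => v (j q))
        (fun q => (Pi.single (j q) 1 : Fin d → ℝ))
  rw [hexp]
  refine le_trans (norm_sum_le _ _) ?_
  have hterm : ∀ j : Fin m → Fin d,
      ‖(∏ q, v (j q)) • iteratedFDeriv ℝ m f x (fun q => (Pi.single (j q) 1 : Fin d → ℝ))‖
      ≤ S (cnt j) := by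
    intro j
    rw [norm_smul, Real.norm_eq_abs]
    have h1 : |∏ q, v (j q)| ≤ 1 := by
      rw [Finset.abs_prod]
      exact Finset.prod_le_one (fun q _ => abs_nonneg _) (fun q _ => hv (j q))
    have h2 : ‖iteratedFDeriv ℝ m f x (fun q => (Pi.single (j q) 1 : Fin d → ℝ))‖ ≤ S (cnt j) := by
      rw [iteratedFDeriv_single m f hf x j]
      rw [Dl_count_eq (fun i => count_ofFn j i) f hf]
      exact sobolev_mderiv r hf (cnt j) hx
    calc |∏ q, v (j q)| * ‖iteratedFDeriv ℝ m f x (fun q => (Pi.single (j q) 1 : Fin d → ℝ))‖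
        ≤ 1 * S (cnt j) := mul_le_mul h1 h2 (norm_nonneg _) zero_le_one
      _ = S (cnt j) := one_mul _
  refine le_trans (Finset.sum_le_sum fun j _ => hterm j) ?_
  -- group by cnt
  have hgroup : ∑ j : Fin m → Fin d, S (cnt j) =
      ∑ α ∈ Finset.univ.image (cnt : (Fin m → Fin d) → Fin d → ℕ),
        ((Finset.univ.filter fun j : Fin m → Fin d => cnt j = α).card : ℝ) * S α := by
    rw [Finset.sum_comp S (cnt : (Fin m → Fin d) → Fin d → ℕ)]
    exact Finset.sum_congr rfl fun α _ => by rw [nsmul_eq_mul]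
  rw [hgroup]
  have himg : Finset.univ.image (cnt : (Fin m → Fin d) → Fin d → ℕ) ⊆ multiIdx d m := by
    intro α hα
    obtain ⟨j, _, rfl⟩ := Finset.mem_image.1 hα
    rw [multiIdx, Finset.mem_filter]
    constructor
    · rw [Fintype.mem_piFinset]
      intro i
      rw [Finset.mem_range]
      have : cnt j i ≤ m := by
        rw [cnt]
        calc (Finset.univ.filter fun q => j q = i).card ≤ Finset.univ.card :=
          Finset.card_le_card (Finset.filter_subset _ _)
        _ = m := by simp
      omega
    · rw [show ∑ i, cnt j i = Finset.univ.card from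
        (Finset.card_eq_sum_card_fiberwise (fun q _ => Finset.mem_univ (j q))).symm]
      simp
  refine le_trans (Finset.sum_le_sum_of_subset_of_nonneg himg ?_) ?_
  · intro α _ _
    exact mul_nonneg (Nat.cast_nonneg _) (hSnn _)
  · refine Finset.sum_le_sum fun α hα => ?_
    have hsum : ∑ i, α i = m := by
      rw [multiIdx, Finset.mem_filter] at hα
      exact hα.2
    have := card_cnt_le_multinomial α hsum
    have hc : ((Finset.univ.filter fun j : Fin m → Fin d => cnt j = α).card : ℝ) ≤
        (Nat.multinomial Finset.univ α : ℝ) := by exact_mod_cast this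
    exact mul_le_mul_of_nonneg_right hc (hSnn α)

end Final

/-- Taylor remainder bound for band-limited sums: for `f = Σ_l f_l e^{i c_l·x}`, a unit cube
`Λ`, `y₀ ∈ Λ`, a unit direction `η`, `0 < ρ ≤ √d` with the segment `y₀ + tρη` in `Λ` and
`|ρη_i| ≤ 1`, the order-`m` Taylor remainder `T(t)` along the segment satisfies
`max_{t∈[0,1]} |T(t)| ≤ (1/m!) Σ_l Σ_{|α|=m} (m!/α!) Σ_{β∈{0,1}^d} ‖∂^{α+β} f_l‖_{L¹(Λ)}`. -/
theorem stmt_15 (d n m : ℕ) (hd : 1 ≤ d) (hn : 1 ≤ n) (hm : 1 ≤ m)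
    (f : Fin n → (Fin d → ℝ) → ℂ) (hf : ∀ l, ContDiff ℝ (⊤ : ℕ∞) (f l))
    (c : Fin n → Fin d → ℝ) (r : Fin d → ℝ)
    (y₀ : Fin d → ℝ) (hy₀ : y₀ ∈ unitCube r)
    (η : Fin d → ℝ) (hη : ∑ i, η i ^ 2 = 1)
    (ρ : ℝ) (hρ : 0 < ρ) (hρd : ρ ≤ Real.sqrt d)
    (hseg : ∀ t ∈ Set.Icc (0 : ℝ) 1, (fun i => y₀ i + t * ρ * η i) ∈ unitCube r)
    (hcoord : ∀ i, |ρ * η i| ≤ 1) :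
    ∀ t ∈ Set.Icc (0 : ℝ) 1,
      ‖∑ l, Complex.exp (Complex.I * ((∑ j, c l j * (y₀ j + t * ρ * η j) : ℝ) : ℂ)) /
            ((m - 1).factorial : ℂ) *
          ∫ s in (0 : ℝ)..t, (((t - s) ^ (m - 1) : ℝ) : ℂ) *
            iteratedDeriv m (fun s' : ℝ => f l fun i => y₀ i + s' * ρ * η i) s‖ ≤
        (1 / (m.factorial : ℝ)) * ∑ l, ∑ α ∈ multiIdx d m,
          ((m.factorial : ℝ) / ∏ i, ((α i).factorial : ℝ)) *
            ∑ β ∈ zeroOneIdx d, ∫ x in unitCube r, ‖mderiv (fun i => α i + β i) (f l) x‖ := by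
  classical
  intro t ht
  have ht0 : (0 : ℝ) ≤ t := ht.1
  have ht1 : t ≤ 1 := ht.2
  set v : Fin d → ℝ := fun i => ρ * η i with hvdef
  set M : Fin n → ℝ := fun l => ∑ α ∈ multiIdx d m,
    ((m.factorial : ℝ) / ∏ i, ((α i).factorial : ℝ)) *
      ∑ β ∈ zeroOneIdx d, ∫ x in unitCube r, ‖mderiv (fun i => α i + β i) (f l) x‖ with hM
  have hMnn : ∀ l, 0 ≤ M l := by
    intro l
    refine Finset.sum_nonneg fun α _ => mul_nonneg (div_nonneg (Nat.cast_nonneg _)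
      (Finset.prod_nonneg fun i _ => Nat.cast_nonneg _)) ?_
    exact Finset.sum_nonneg fun β _ => integral_nonneg fun z => norm_nonneg _
  have hMeq : ∀ l, ∑ α ∈ multiIdx d m, (Nat.multinomial Finset.univ α : ℝ) *
      ∑ β ∈ zeroOneIdx d, ∫ x in unitCube r, ‖mderiv (fun i => α i + β i) (f l) x‖ = M l := by
    intro l
    refine Finset.sum_congr rfl fun α hα => ?_
    have hsum : ∑ i, α i = m := by
      rw [multiIdx, Finset.mem_filter] at hα
      exact hα.2
    have hspec := Nat.multinomial_spec Finset.univ α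
    rw [hsum] at hspec
    congr 1
    have hpos : (0 : ℝ) < ∏ i, ((α i).factorial : ℝ) :=
      Finset.prod_pos fun i _ => by exact_mod_cast (α i).factorial_pos
    rw [eq_div_iff (ne_of_gt hpos)]
    exact_mod_cast (mul_comm (∏ i ∈ Finset.univ, (α i).factorial) (Nat.multinomial Finset.univ α)
      ▸ hspec)
  -- per-l bound
  have key : ∀ l, ‖Complex.exp (Complex.I * ((∑ j, c l j * (y₀ j + t * ρ * η j) : ℝ) : ℂ)) /
            ((m - 1).factorial : ℂ) *
          ∫ s in (0 : ℝ)..t, (((t - s) ^ (m - 1) : ℝ) : ℂ) *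
            iteratedDeriv m (fun s' : ℝ => f l fun i => y₀ i + s' * ρ * η i) s‖ ≤
      (1 / (m.factorial : ℝ)) * M l := by
    intro l
    have hcurve : (fun s' : ℝ => f l fun i => y₀ i + s' * ρ * η i)
        = fun s' : ℝ => f l fun i => y₀ i + s' * v i := by
      funext s'
      congr 1
      funext i
      rw [hvdef]
      ring
    have hiter : iteratedDeriv m (fun s' : ℝ => f l fun i => y₀ i + s' * ρ * η i)
        = fun s => iteratedFDeriv ℝ m (f l) (fun i => y₀ i + s * v i) (fun _ => v) := by
      rw [hcurve, iteratedDeriv_line (f l) (hf l) y₀ v m]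
    have hptw : ∀ s ∈ Set.Icc (0:ℝ) 1,
        ‖iteratedDeriv m (fun s' : ℝ => f l fun i => y₀ i + s' * ρ * η i) s‖ ≤ M l := by
      intro s hs
      rw [hiter]
      have hxmem : (fun i => y₀ i + s * v i) ∈ unitCube r := by
        have heq : (fun i => y₀ i + s * v i) = (fun i => y₀ i + s * ρ * η i) := by
          funext i
          rw [hvdef]
          ring
        rw [heq]
        exact hseg s hs
      refine le_trans (pointwise_bound r m (hf l) v hcoord hxmem) (le_of_eq (hMeq l))
    -- norm of exponential factor
    have hexp : ‖Complex.exp (Complex.I * ((∑ j, c l j * (y₀ j + t * ρ * η j) : ℝ) : ℂ)) /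
        ((m - 1).factorial : ℂ)‖ = 1 / ((m - 1).factorial : ℝ) := by
      rw [norm_div]
      congr 1
      · rw [Complex.norm_exp]
        have : (Complex.I * ((∑ j, c l j * (y₀ j + t * ρ * η j) : ℝ) : ℂ)).re = 0 := by
          simp [Complex.mul_re]
        rw [this, Real.exp_zero]
      · exact_mod_cast Complex.norm_natCast _
    -- integral bound
    have hGcont : Continuous (iteratedDeriv m
        (fun s' : ℝ => f l fun i => y₀ i + s' * ρ * η i)) := by
      refine ContDiff.continuous_iteratedDeriv (n := ((⊤ : ℕ∞) : WithTop ℕ∞)) m ?_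
        (by exact_mod_cast (le_top : (m : ℕ∞) ≤ ⊤))
      refine (hf l).comp ?_
      refine contDiff_pi.2 fun i => ?_
      exact contDiff_const.add ((contDiff_id.mul contDiff_const).mul contDiff_const)
    have hib : ‖∫ s in (0 : ℝ)..t, (((t - s) ^ (m - 1) : ℝ) : ℂ) *
          iteratedDeriv m (fun s' : ℝ => f l fun i => y₀ i + s' * ρ * η i) s‖ ≤
        |∫ s in (0 : ℝ)..t, ((t - s) ^ (m - 1) * M l : ℝ)| := by
      refine intervalIntegral.norm_integral_le_abs_of_norm_le ?_ ?_
      · rw [Set.uIoc_of_le ht0]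
        filter_upwards [ae_restrict_mem measurableSet_Ioc] with s hs
        rw [norm_mul, Complex.norm_real, Real.norm_eq_abs,
          abs_of_nonneg (pow_nonneg (sub_nonneg.2 hs.2) _)]
        refine mul_le_mul_of_nonneg_left ?_ (pow_nonneg (sub_nonneg.2 hs.2) _)
        exact hptw s ⟨le_of_lt hs.1, le_trans hs.2 ht1⟩
      · exact (((continuous_const.sub continuous_id).pow _).mul continuous_const).intervalIntegrable _ _
    have hival : ∫ s in (0 : ℝ)..t, ((t - s) ^ (m - 1) * M l : ℝ) = t ^ m / m * M l := by
      rw [intervalIntegral.integral_mul_const]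
      congr 1
      have h1 := intervalIntegral.integral_comp_sub_left (a := (0:ℝ)) (b := t)
        (fun x => x ^ (m - 1)) t
      rw [sub_self, sub_zero] at h1
      rw [h1, integral_pow]
      rw [Nat.sub_add_cancel hm]
      rw [zero_pow (by omega : m ≠ 0), sub_zero]
      have hcast : ((m - 1 : ℕ) : ℝ) + 1 = m := by
        push_cast [Nat.cast_sub hm]
        ring
      rw [hcast]
    have hfinal : |∫ s in (0 : ℝ)..t, ((t - s) ^ (m - 1) * M l : ℝ)| ≤ 1 / m * M l := by
      rw [hival, abs_of_nonneg (mul_nonneg (div_nonneg (pow_nonneg ht0 _)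
        (Nat.cast_nonneg _)) (hMnn l))]
      refine mul_le_mul_of_nonneg_right ?_ (hMnn l)
      have hmpos : (0 : ℝ) < m := by exact_mod_cast (by omega : 0 < m)
      gcongr
      exact pow_le_one₀ ht0 ht1
    rw [norm_mul, hexp]
    calc 1 / ((m - 1).factorial : ℝ) * ‖∫ s in (0 : ℝ)..t, (((t - s) ^ (m - 1) : ℝ) : ℂ) *
            iteratedDeriv m (fun s' : ℝ => f l fun i => y₀ i + s' * ρ * η i) s‖
        ≤ 1 / ((m - 1).factorial : ℝ) * (1 / m * M l) := by
          refine mul_le_mul_of_nonneg_left (le_trans hib hfinal) (by positivity)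
      _ = 1 / (m.factorial : ℝ) * M l := by
          have : (m.factorial : ℝ) = m * ((m - 1).factorial : ℝ) := by
            exact_mod_cast (Nat.mul_factorial_pred (by omega)).symm
          rw [this]
          have h1 : ((m - 1).factorial : ℝ) ≠ 0 := by positivity
          have h2 : (m : ℝ) ≠ 0 := by
            exact_mod_cast Nat.cast_ne_zero.2 (by omega)
          rw [one_div, one_div, one_div, mul_inv]
          ring
  calc ‖∑ l, Complex.exp (Complex.I * ((∑ j, c l j * (y₀ j + t * ρ * η j) : ℝ) : ℂ)) /
            ((m - 1).factorial : ℂ) *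
          ∫ s in (0 : ℝ)..t, (((t - s) ^ (m - 1) : ℝ) : ℂ) *
            iteratedDeriv m (fun s' : ℝ => f l fun i => y₀ i + s' * ρ * η i) s‖
      ≤ ∑ l, ‖Complex.exp (Complex.I * ((∑ j, c l j * (y₀ j + t * ρ * η j) : ℝ) : ℂ)) /
            ((m - 1).factorial : ℂ) *
          ∫ s in (0 : ℝ)..t, (((t - s) ^ (m - 1) : ℝ) : ℂ) *
            iteratedDeriv m (fun s' : ℝ => f l fun i => y₀ i + s' * ρ * η i) s‖ :=
        norm_sum_le _ _
    _ ≤ ∑ l, (1 / (m.factorial : ℝ)) * M l := Finset.sum_le_sum fun l _ => key l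
    _ = (1 / (m.factorial : ℝ)) * ∑ l, M l := by rw [Finset.mul_sum]
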